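/- arXiv:0905.0121 — 3 statements merged into one kernel-verified Lean document; each statement's English description precedes it below -/
import Mathlib

section
/- The tropical roots of a max-plus polynomial P with coefficients P_0,...,P_n are the opposites of the slopes of the linear segments forming the Newton polygon Δ(P), and the multiplicity of each root equals the horizontal width of the corresponding segment. -/
/-!
Every point `(t, y)` of the Newton polygon lies below each line `y + t x = p(x)`, because the
generators `(k, P_k)` do. By the factorization, `p(x) - m x` is minimized at any `x` lying above
`c_0, …, c_{m-1}` and below `c_m, …, c_{n-1}`, where it equals `P_n + ∑_{j ≥ m} c_j`; this bounds
`F m` from above. Conversely, the upper boundary `F` is concave, so for an integer `m < n` the line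
through `(m, F m)` and `(m + 1, F (m + 1))` lies above `F` at all integers; evaluating `p` at minus
its slope gives the reverse inequality. Hence `F m = P_n + ∑_{j ≥ m} c_j`, and consecutive
differences are `-c_m`.
-/

open Finset

theorem snd_add_fst_mul_le_of_mem_convexHull {s : Set (ℝ × ℝ)} {x M : ℝ}
    (hs : ∀ q ∈ s, q.2 + q.1 * x ≤ M) {q : ℝ × ℝ} (hq : q ∈ convexHull ℝ s) :
    q.2 + q.1 * x ≤ M := by
  have hlin : IsLinearMap ℝ fun q : ℝ × ℝ => q.2 + q.1 * x :=
    ⟨fun a b => by simp only [Prod.fst_add, Prod.snd_add]; ring,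
      fun r a => by simp only [Prod.smul_fst, Prod.smul_snd, smul_eq_mul]; ring⟩
  exact convexHull_min hs (convex_halfSpace_le hlin M) hq

theorem concaveOn_of_isGreatest_slice {S : Set (ℝ × ℝ)} (hS : Convex ℝ S) {I : Set ℝ}
    (hI : Convex ℝ I) {F : ℝ → ℝ} (hF : ∀ t ∈ I, IsGreatest {y | (t, y) ∈ S} (F t)) :
    ConcaveOn ℝ I F := by
  refine ⟨hI, fun a ha b hb μ ν hμ hν hμν => (hF _ (hI ha hb hμ hν hμν)).2 ?_⟩
  simpa using hS (hF a ha).1 (hF b hb).1 hμ hν hμν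

theorem ConcaveOn.le_unit_secant_line {s : Set ℝ} {f : ℝ → ℝ} (hf : ConcaveOn ℝ s f)
    {m t : ℝ} (hm : m ∈ s) (hm1 : m + 1 ∈ s) (ht : t ∈ s) (htm : t ≤ m ∨ m + 1 ≤ t) :
    f t ≤ f m + (t - m) * (f (m + 1) - f m) := by
  rcases htm with h | h
  · rcases h.lt_or_eq with h | rfl
    · have := hf.slope_anti_adjacent ht hm1 h (lt_add_one m)
      rw [add_sub_cancel_left, div_one, le_div_iff₀ (sub_pos.2 h)] at this
      linarith
    · simp
  · rcases h.lt_or_eq with h | rfl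
    · have := hf.slope_anti_adjacent hm ht (lt_add_one m) h
      rw [add_sub_cancel_left, div_one, div_le_iff₀ (sub_pos.2 h)] at this
      linarith
    · simp

theorem Monotone.exists_ge_head_le_tail {n : ℕ} {c : Fin n → ℝ} (hc : Monotone c) (m : ℕ) :
    ∃ x, (∀ j : Fin n, (j : ℕ) < m → c j ≤ x) ∧ (∀ j : Fin n, m ≤ (j : ℕ) → x ≤ c j) := by
  by_cases hm : m < n
  · exact ⟨c ⟨m, hm⟩, fun j hj => hc (Fin.mk_le_mk.2 hj.le),
      fun j hj => hc (Fin.mk_le_mk.2 hj)⟩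
  · obtain ⟨M, hM⟩ := (Set.finite_range c).bddAbove
    exact ⟨M, fun j _ => hM ⟨j, rfl⟩, fun j hj => absurd j.is_lt (by omega)⟩

section SumMax

variable {n m : ℕ} (c : Fin n → ℝ) (x : ℝ)

theorem card_filter_not_le_val (hm : m ≤ n) : #{j : Fin n | ¬m ≤ j.val} = m := by
  simp only [not_le, Fin.card_filter_val_lt, min_eq_right hm]

theorem mul_add_sum_tail_le_sum_max (hm : m ≤ n) :
    m * x + ∑ j : Fin n with m ≤ j.val, c j ≤ ∑ j, max x (c j) := by
  rw [← sum_filter_not_add_sum_filter univ fun j : Fin n => m ≤ j.val]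
  gcongr with j
  · calc (m : ℝ) * x = ∑ _j : Fin n with ¬m ≤ _j.val, x := by
          rw [sum_const, card_filter_not_le_val hm, nsmul_eq_mul]
      _ ≤ _ := sum_le_sum fun j _ => le_max_left _ _
  · exact le_max_right _ _

theorem sum_max_eq_mul_add_sum_tail (hm : m ≤ n) (hhead : ∀ j : Fin n, (j : ℕ) < m → c j ≤ x)
    (htail : ∀ j : Fin n, m ≤ (j : ℕ) → x ≤ c j) :
    ∑ j, max x (c j) = m * x + ∑ j : Fin n with m ≤ j.val, c j := by
  rw [← sum_filter_not_add_sum_filter univ fun j : Fin n => m ≤ j.val]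
  congr 1
  · rw [sum_congr rfl fun j hj => max_eq_left (hhead j (not_le.1 (mem_filter.1 hj).2)),
      sum_const, card_filter_not_le_val hm, nsmul_eq_mul]
  · exact sum_congr rfl fun j hj => max_eq_right (htail j (mem_filter.1 hj).2)

theorem sum_tail_eq_add_sum_tail_succ (k : Fin n) :
    ∑ j : Fin n with (k : ℕ) ≤ j.val, c j = c k + ∑ j : Fin n with (k : ℕ) + 1 ≤ j.val, c j := by
  rw [← sum_insert (s := {j : Fin n | (k : ℕ) + 1 ≤ j.val}) (by simp)]
  congr 1
  ext j
  simp only [mem_filter, mem_univ, true_and, mem_insert, Fin.ext_iff]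
  omega

end SumMax

noncomputable def maxPlusEval {n : ℕ} (P : Fin (n + 1) → ℝ) (x : ℝ) : ℝ :=
  univ.sup' univ_nonempty fun k : Fin (n + 1) => P k + (k : ℕ) * x

def newtonHull {n : ℕ} (P : Fin (n + 1) → ℝ) : Set (ℝ × ℝ) :=
  convexHull ℝ (Set.range fun k : Fin (n + 1) => (((k : ℕ) : ℝ), P k))

section NewtonPolygon

variable {n : ℕ} {P : Fin (n + 1) → ℝ} {c : Fin n → ℝ}

theorem snd_add_fst_mul_le_maxPlusEval {q : ℝ × ℝ} (hq : q ∈ newtonHull P) (x : ℝ) :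
    q.2 + q.1 * x ≤ maxPlusEval P x :=
  snd_add_fst_mul_le_of_mem_convexHull
    (by rintro _ ⟨k, rfl⟩; exact le_sup' (fun k : Fin (n + 1) => P k + (k : ℕ) * x) (mem_univ k))
    hq

theorem le_last_add_sum_tail (hmono : Monotone c)
    (hfact : ∀ x, maxPlusEval P x = P (Fin.last n) + ∑ k, max x (c k))
    {m : ℕ} (hm : m ≤ n) {y : ℝ} (hy : ((m : ℝ), y) ∈ newtonHull P) :
    y ≤ P (Fin.last n) + ∑ j : Fin n with m ≤ j.val, c j := by
  obtain ⟨x, hhead, htail⟩ := hmono.exists_ge_head_le_tail m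
  have := snd_add_fst_mul_le_maxPlusEval hy x
  rw [hfact, sum_max_eq_mul_add_sum_tail c x hm hhead htail] at this
  linarith

theorem last_add_sum_tail_le
    (hfact : ∀ x, maxPlusEval P x = P (Fin.last n) + ∑ k, max x (c k))
    {F : ℝ → ℝ} (hconc : ConcaveOn ℝ (Set.Icc (0 : ℝ) n) F)
    (hPF : ∀ k : Fin (n + 1), P k ≤ F (k : ℕ))
    {m : ℕ} (hm : m ≤ n) :
    P (Fin.last n) + ∑ j : Fin n with m ≤ j.val, c j ≤ F m := by
  rcases hm.lt_or_eq with hm | rfl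
  · set x := F m - F (m + 1)
    have hmem : ∀ j : ℕ, j ≤ n → (j : ℝ) ∈ Set.Icc (0 : ℝ) n :=
      fun j hj => ⟨j.cast_nonneg, by exact_mod_cast hj⟩
    have hsupport : maxPlusEval P x ≤ F m + m * x := by
      refine sup'_le _ _ fun k _ => ?_
      have hsec := hconc.le_unit_secant_line (hmem m hm.le) (by exact_mod_cast hmem (m + 1) hm)
        (hmem k (Nat.lt_succ_iff.1 k.is_lt))
        (by rcases le_or_gt (k : ℕ) m with h | h <;> [left; right] <;> exact_mod_cast h)
      have := hPF k
      linarith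
    have := mul_add_sum_tail_le_sum_max c x hm.le
    rw [hfact] at hsupport
    linarith
  · rw [filter_false_of_mem fun j _ => not_le.2 j.is_lt, sum_empty, add_zero]
    exact hPF (Fin.last m)

end NewtonPolygon

/-- The tropical roots of a max-plus polynomial `P` (with finite
coefficients `P_0,…,P_n`) are the opposites of the slopes of the linear segments of the
Newton polygon `Δ(P)` (the upper boundary of the convex hull of the points `(k, P_k)`),
with multiplicity of each root equal to the horizontal width of the corresponding
segment.  Equivalently, writing `F t` for the height of the upper boundary of the convex
hull above abscissa `t`, the slope of `Δ(P)` on the unit interval `[k, k+1]` is `−c_k`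
where `c_0 ≤ … ≤ c_{n-1}` are the tropical roots sorted increasingly (a root `c` of
multiplicity `m` thus accounts for a segment of slope `−c` and horizontal width `m`). -/
theorem maxplus_roots_are_newton_polygon_slopes (n : ℕ) (P : Fin (n + 1) → ℝ)
    (c : Fin n → ℝ) (hmono : Monotone c)
    (hfact : ∀ x : ℝ,
      (Finset.univ.sup' Finset.univ_nonempty fun k : Fin (n + 1) => P k + (k : ℕ) * x) =
        P (Fin.last n) + ∑ k : Fin n, max x (c k))
    (F : ℝ → ℝ)
    (hF : ∀ t : ℝ, 0 ≤ t → t ≤ n → IsGreatest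
      {y : ℝ | (t, y) ∈ convexHull ℝ (Set.range fun k : Fin (n + 1) => (((k : ℕ) : ℝ), P k))}
      (F t)) :
    ∀ k : Fin n, F ((k : ℕ) + 1) - F (k : ℕ) = -(c k) := by
  intro k
  have hFnat : ∀ m : ℕ, m ≤ n → IsGreatest {y | ((m : ℝ), y) ∈ newtonHull P} (F m) :=
    fun m hm => hF m m.cast_nonneg (by exact_mod_cast hm)
  have hconc : ConcaveOn ℝ (Set.Icc (0 : ℝ) n) F :=
    concaveOn_of_isGreatest_slice (convex_convexHull ℝ _) (convex_Icc _ _)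
      fun t ht => hF t ht.1 ht.2
  have hPF : ∀ j : Fin (n + 1), P j ≤ F (j : ℕ) :=
    fun j => (hFnat j (Nat.lt_succ_iff.1 j.is_lt)).2 (subset_convexHull ℝ _ ⟨j, rfl⟩)
  have key : ∀ m : ℕ, m ≤ n → F m = P (Fin.last n) + ∑ j : Fin n with m ≤ j.val, c j :=
    fun m hm => le_antisymm (le_last_add_sum_tail hmono hfact hm (hFnat m hm).1)
      (last_add_sum_tail_le hfact hconc hPF hm)
  have hsucc := key ((k : ℕ) + 1) k.is_lt
  push_cast at hsucc
  rw [hsucc, key k k.is_lt.le, sum_tail_eq_add_sum_tail_succ]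
  ring
end

section
/- Let A_2 ∈ ℂ^{n×n} be invertible, γ_2 = ‖A_2‖, γ_1 = ‖A_1‖, γ_0 = ‖A_0‖, δ = γ_1²/(γ_0 γ_2). Set Ā_2 = γ_2^{-1} A_2, Ā_1 = γ_1^{-1} A_1, Ā_0 = (γ_2/γ_1²) A_0, and let X be the 2n×2n block companion matrix with first block row (−Ā_2^{-1}Ā_1, −Ā_2^{-1}Ā_0) and second block row (I, 0). Then ‖X‖ ≤ 1 + cond(A_2)(1 + 1/δ). -/
/-!
The 2-norm of a block matrix is at most the sum of the norms of its blocks, because a matrix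
stacked on a zero block has the same Gram matrix `Xᴴ X`, hence the same norm. For the companion
matrix this gives `‖X‖ ≤ 1 + ‖B₂⁻¹‖ (‖B₁‖ + ‖B₀‖)`, and the scaling is chosen so that
`‖B₂⁻¹‖ = ‖A₂‖ ‖A₂⁻¹‖ = cond(A₂)`, `‖B₁‖ ≤ 1` and `‖B₀‖ = γ₂ γ₀ / γ₁² = 1 / δ`.
-/

/-- The operator 2-norm of a complex matrix. -/
noncomputable def opNorm {m : Type*} [Fintype m] [DecidableEq m]
    (A : Matrix m m ℂ) : ℝ :=
  ‖(Matrix.toEuclideanCLM (𝕜 := ℂ) A : EuclideanSpace ℂ m →L[ℂ] EuclideanSpace ℂ m)‖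

/-- Condition number `cond A = ‖A‖ ‖A⁻¹‖` for the operator 2-norm. -/
noncomputable def condNum {m : Type*} [Fintype m] [DecidableEq m]
    (A : Matrix m m ℂ) : ℝ :=
  opNorm A * opNorm A⁻¹

open scoped Matrix Matrix.Norms.L2Operator

lemma norm_inv_norm_smul_le_one {𝕜 E : Type*} [RCLike 𝕜] [NormedAddCommGroup E] [NormedSpace 𝕜 E]
    (x : E) : ‖(‖x‖ : 𝕜)⁻¹ • x‖ ≤ 1 := by
  rcases eq_or_ne x 0 with rfl | hx
  · simp
  · exact (norm_smul_inv_norm hx).le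

lemma opNorm_eq_l2_opNorm {m : Type*} [Fintype m] [DecidableEq m] (A : Matrix m m ℂ) :
    opNorm A = ‖A‖ :=
  rfl

namespace Matrix

lemma inv_smul₀ {K n : Type*} [Field K] [Fintype n] [DecidableEq n] (c : K) (A : Matrix n n K) :
    (c • A)⁻¹ = c⁻¹ • A⁻¹ := by
  rcases eq_or_ne c 0 with rfl | hc
  · simp
  by_cases hA : IsUnit A.det
  · exact inv_smul' A (Units.mk0 c hc) hA
  · have hcA : ¬IsUnit (c • A).det := by
      rwa [det_smul, IsUnit.mul_iff, not_and_or, or_iff_right]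
      exact not_not.mpr ((Ne.isUnit hc).pow _)
    rw [nonsing_inv_apply_not_isUnit _ hA, nonsing_inv_apply_not_isUnit _ hcA, smul_zero]

variable {𝕜 l m n : Type*} [RCLike 𝕜] [Fintype l] [Fintype m] [Fintype n] [DecidableEq l]

lemma l2_opNorm_one_le : ‖(1 : Matrix l l 𝕜)‖ ≤ 1 := by
  rw [cstar_norm_def, map_one]
  exact ContinuousLinearMap.norm_id_le

lemma l2_opNorm_eq_of_conjTranspose_mul_self_eq {X : Matrix m l 𝕜} {Y : Matrix n l 𝕜}
    (h : Xᴴ * X = Yᴴ * Y) : ‖X‖ = ‖Y‖ := by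
  have := l2_opNorm_conjTranspose_mul_self X
  rw [h, l2_opNorm_conjTranspose_mul_self] at this
  exact (mul_self_inj (norm_nonneg X) (norm_nonneg Y)).mp this.symm

lemma l2_opNorm_fromRows_zero_right (A : Matrix m l 𝕜) :
    ‖fromRows A (0 : Matrix n l 𝕜)‖ = ‖A‖ :=
  l2_opNorm_eq_of_conjTranspose_mul_self_eq <| by
    simp [conjTranspose_fromRows_eq_fromCols_conjTranspose, fromCols_mul_fromRows]

lemma l2_opNorm_fromRows_zero_left (A : Matrix n l 𝕜) :
    ‖fromRows (0 : Matrix m l 𝕜) A‖ = ‖A‖ :=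
  l2_opNorm_eq_of_conjTranspose_mul_self_eq <| by
    simp [conjTranspose_fromRows_eq_fromCols_conjTranspose, fromCols_mul_fromRows]

lemma l2_opNorm_fromRows_le (A₁ : Matrix m l 𝕜) (A₂ : Matrix n l 𝕜) :
    ‖fromRows A₁ A₂‖ ≤ ‖A₁‖ + ‖A₂‖ := by
  have h : fromRows A₁ A₂ = fromRows A₁ 0 + fromRows 0 A₂ := by
    ext (_ | _) _ <;> simp
  rw [h, ← l2_opNorm_fromRows_zero_right A₁ (n := n), ← l2_opNorm_fromRows_zero_left A₂ (m := m)]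
  exact norm_add_le _ _

lemma l2_opNorm_fromCols_le [DecidableEq m] [DecidableEq n] (B₁ : Matrix l m 𝕜)
    (B₂ : Matrix l n 𝕜) : ‖fromCols B₁ B₂‖ ≤ ‖B₁‖ + ‖B₂‖ := by
  rw [← l2_opNorm_conjTranspose, conjTranspose_fromCols_eq_fromRows_conjTranspose,
    ← l2_opNorm_conjTranspose B₁, ← l2_opNorm_conjTranspose B₂]
  exact l2_opNorm_fromRows_le _ _

lemma l2_opNorm_fromBlocks_le {m₁ m₂ n₁ n₂ : Type*} [Fintype m₁] [Fintype m₂] [Fintype n₁]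
    [Fintype n₂] [DecidableEq m₁] [DecidableEq m₂] [DecidableEq n₁] [DecidableEq n₂]
    (A : Matrix m₁ n₁ 𝕜) (B : Matrix m₁ n₂ 𝕜) (C : Matrix m₂ n₁ 𝕜) (D : Matrix m₂ n₂ 𝕜) :
    ‖fromBlocks A B C D‖ ≤ ‖A‖ + ‖B‖ + ‖C‖ + ‖D‖ := by
  rw [← fromRows_fromCols_eq_fromBlocks]
  linarith [l2_opNorm_fromRows_le (fromCols A B) (fromCols C D), l2_opNorm_fromCols_le A B,
    l2_opNorm_fromCols_le C D]

lemma l2_opNorm_companion_le (M B₁ B₀ : Matrix l l 𝕜) :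
    ‖fromBlocks (-(M * B₁)) (-(M * B₀)) (1 : Matrix l l 𝕜) 0‖ ≤ 1 + ‖M‖ * (‖B₁‖ + ‖B₀‖) :=
  calc _ ≤ ‖-(M * B₁)‖ + ‖-(M * B₀)‖ + ‖(1 : Matrix l l 𝕜)‖ + ‖(0 : Matrix l l 𝕜)‖ :=
        l2_opNorm_fromBlocks_le _ _ _ _
    _ ≤ ‖M‖ * ‖B₁‖ + ‖M‖ * ‖B₀‖ + 1 + 0 := by
        rw [norm_neg, norm_neg, norm_zero]
        gcongr
        exacts [l2_opNorm_mul M B₁, l2_opNorm_mul M B₀, l2_opNorm_one_le]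
    _ = 1 + ‖M‖ * (‖B₁‖ + ‖B₀‖) := by ring

end Matrix

theorem companion_norm_bound_general (n : ℕ) (A₂ A₁ A₀ : Matrix (Fin n) (Fin n) ℂ)
    (γ₂ γ₁ γ₀ δ : ℝ) (hγ₂ : γ₂ = opNorm A₂) (hγ₁ : γ₁ = opNorm A₁) (hγ₀ : γ₀ = opNorm A₀)
    (hδ : δ = γ₁ ^ 2 / (γ₀ * γ₂))
    (B₂ B₁ B₀ : Matrix (Fin n) (Fin n) ℂ)
    (h₂ : B₂ = (γ₂⁻¹ : ℂ) • A₂) (h₁ : B₁ = (γ₁⁻¹ : ℂ) • A₁)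
    (h₀ : B₀ = ((γ₂ / γ₁ ^ 2 : ℝ) : ℂ) • A₀)
    (Xc : Matrix (Fin n ⊕ Fin n) (Fin n ⊕ Fin n) ℂ)
    (hX : Xc = Matrix.fromBlocks (-(B₂⁻¹ * B₁)) (-(B₂⁻¹ * B₀)) 1 0) :
    opNorm Xc ≤ 1 + condNum A₂ * (1 + 1 / δ) := by
  rw [opNorm_eq_l2_opNorm] at hγ₂ hγ₁ hγ₀
  have hB₂inv : ‖B₂⁻¹‖ = condNum A₂ := by
    rw [h₂, Matrix.inv_smul₀, inv_inv, norm_smul, Complex.norm_real, Real.norm_of_nonneg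
      (hγ₂ ▸ norm_nonneg _), hγ₂]
    rfl
  have hB₁ : ‖B₁‖ ≤ 1 := h₁ ▸ hγ₁ ▸ norm_inv_norm_smul_le_one A₁
  have hB₀ : ‖B₀‖ = 1 / δ := by
    have : 0 ≤ γ₂ / γ₁ ^ 2 := div_nonneg (hγ₂ ▸ norm_nonneg _) (sq_nonneg _)
    rw [h₀, norm_smul, Complex.norm_real, Real.norm_of_nonneg this, hδ, one_div_div, ← hγ₀]
    ring
  calc opNorm Xc ≤ 1 + ‖B₂⁻¹‖ * (‖B₁‖ + ‖B₀‖) := hX ▸ Matrix.l2_opNorm_companion_le _ _ _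
    _ ≤ 1 + condNum A₂ * (1 + 1 / δ) := by
      rw [hB₂inv, hB₀]
      gcongr
      exact hB₂inv ▸ norm_nonneg _

/-- with `A₂` invertible, `γ_i = ‖A_i‖`, `δ = γ₁²/(γ₀γ₂)`,
`B₂ = γ₂⁻¹A₂`, `B₁ = γ₁⁻¹A₁`, `B₀ = (γ₂/γ₁²)A₀`, the block companion matrix
`X = [[−B₂⁻¹B₁, −B₂⁻¹B₀],[I, 0]]` satisfies `‖X‖ ≤ 1 + cond(A₂)(1 + 1/δ)`. -/
theorem companion_norm_bound (n : ℕ) (A₂ A₁ A₀ : Matrix (Fin n) (Fin n) ℂ)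
    (hA₂ : IsUnit A₂.det)
    (γ₂ γ₁ γ₀ δ : ℝ) (hγ₂ : γ₂ = opNorm A₂) (hγ₁ : γ₁ = opNorm A₁) (hγ₀ : γ₀ = opNorm A₀)
    (hγ₀pos : 0 < γ₀) (hγ₁pos : 0 < γ₁)
    (hδ : δ = γ₁ ^ 2 / (γ₀ * γ₂))
    (B₂ B₁ B₀ : Matrix (Fin n) (Fin n) ℂ)
    (h₂ : B₂ = (γ₂⁻¹ : ℂ) • A₂) (h₁ : B₁ = (γ₁⁻¹ : ℂ) • A₁)
    (h₀ : B₀ = ((γ₂ / γ₁ ^ 2 : ℝ) : ℂ) • A₀)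
    (Xc : Matrix (Fin n ⊕ Fin n) (Fin n ⊕ Fin n) ℂ)
    (hX : Xc = Matrix.fromBlocks (-(B₂⁻¹ * B₁)) (-(B₂⁻¹ * B₀)) 1 0) :
    opNorm Xc ≤ 1 + condNum A₂ * (1 + 1 / δ) :=
  companion_norm_bound_general n A₂ A₁ A₀ γ₂ γ₁ γ₀ δ hγ₂ hγ₁ hγ₀ hδ B₂ B₁ B₀ h₂ h₁ h₀ Xc hX
end

section
/- Let tp(x) = max_{0≤k≤d}(γ_k x^k) be a max-times polynomial with γ_0, γ_d > 0 and tropical roots α_1 ≤ ... ≤ α_d (with multiplicity). Then for every x > 0, tp(x) = γ_d · Π_{k=1}^{d} max(x, α_k). -/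
/-!
Let `A = max_{j<d} (γ_j / γ_d)^{1/(d-j)}`, attained at some `j < d`. Then `γ_k ≤ γ_d A^(d-k)`
for every `k`, with equality at `j`. Hence `tp x = γ_d x^d` for `x ≥ A`, so `A` is a tropical
root (witnessed by `j` and `d`), while for `x ≤ A` the monomials of degree `k > j` are dominated
by the one of degree `j`, so `tp` agrees with its truncation to degree `j`, whose leading
coefficient is `γ_j = γ_d A^(d-j)`. By induction on the degree, the truncation factorizes with
roots `β ≤ A`, and appending `d - j` copies of `A` to `β` factorizes `tp`.
-/

open Finset

namespace MaxTimes

section ExtendByConst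

variable {α : Type*} {j d : ℕ}

def extendByConst (β : Fin j → α) (a : α) : Fin d → α :=
  fun k => if h : (k : ℕ) < j then β ⟨k, h⟩ else a

lemma forall_extendByConst {P : α → Prop} {β : Fin j → α} {a : α} (hβ : ∀ k, P (β k))
    (ha : P a) : ∀ k : Fin d, P (extendByConst β a k) := by
  intro k
  unfold extendByConst
  split_ifs
  exacts [hβ _, ha]

lemma monotone_extendByConst [Preorder α] {β : Fin j → α} {a : α} (hβ : Monotone β)
    (hβa : ∀ k, β k ≤ a) : Monotone (extendByConst β a : Fin d → α) := by
  intro k l hkl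
  rw [Fin.le_def] at hkl
  unfold extendByConst
  split_ifs with hk hl hl
  · exact hβ (Fin.mk_le_mk.2 hkl)
  · exact hβa _
  · omega
  · exact le_rfl

lemma prod_extendByConst {M : Type*} [CommMonoid M] (hjd : j ≤ d) (β : Fin j → α) (a : α)
    (f : α → M) :
    ∏ k : Fin d, f (extendByConst β a k) = (∏ k : Fin j, f (β k)) * f a ^ (d - j) := by
  obtain ⟨m, rfl⟩ := Nat.exists_eq_add_of_le hjd
  simp [Fin.prod_univ_add, extendByConst]

end ExtendByConst

lemma le_of_prod_max_eq_pow {R : Type*} [CommSemiring R] [LinearOrder R]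
    [IsStrictOrderedRing R] {n : ℕ} {a : R} (ha : 0 < a) (β : Fin n → R)
    (h : ∏ k, max a (β k) = a ^ n) (k : Fin n) :
    β k ≤ a := by
  by_contra! hk
  have : ∏ _i : Fin n, a < ∏ i, max a (β i) :=
    prod_lt_prod (fun _ _ => ha) (fun _ _ => le_max_left _ _) ⟨k, mem_univ _, by simpa using hk⟩
  simp [h] at this

lemma pow_sub_mul_pow_le {R : Type*} [CommSemiring R] [PartialOrder R] [IsOrderedRing R]
    {a b : R} (ha : 0 ≤ a) (hab : a ≤ b) {i k d : ℕ} (hik : i ≤ k) (hkd : k ≤ d) :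
    b ^ (d - k) * a ^ k ≤ b ^ (d - i) * a ^ i := by
  obtain ⟨m, rfl⟩ := Nat.exists_eq_add_of_le hik
  have hb : 0 ≤ b := ha.trans hab
  calc b ^ (d - (i + m)) * a ^ (i + m) = b ^ (d - (i + m)) * a ^ m * a ^ i := by ring
    _ ≤ b ^ (d - (i + m)) * b ^ m * a ^ i := by gcongr
    _ = b ^ (d - i) * a ^ i := by rw [← pow_add, show d - (i + m) + m = d - i by omega]

variable {d : ℕ}

noncomputable def eval (γ : Fin (d + 1) → ℝ) (x : ℝ) : ℝ :=
  univ.sup' univ_nonempty fun k : Fin (d + 1) => γ k * x ^ (k : ℕ)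

def IsRoot (γ : Fin (d + 1) → ℝ) (a : ℝ) : Prop :=
  ∃ k₁ k₂ : Fin (d + 1), k₁ ≠ k₂ ∧
    γ k₁ * a ^ (k₁ : ℕ) = eval γ a ∧ γ k₂ * a ^ (k₂ : ℕ) = eval γ a

def IsFactorization (γ : Fin (d + 1) → ℝ) (α : Fin d → ℝ) : Prop :=
  Monotone α ∧ (∀ k, 0 ≤ α k) ∧ (∀ k, IsRoot γ (α k)) ∧
    ∀ x, 0 < x → eval γ x = γ (Fin.last d) * ∏ k, max x (α k)

def truncate (γ : Fin (d + 1) → ℝ) {m : ℕ} (hm : m ≤ d) : Fin (m + 1) → ℝ :=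
  fun k => γ (Fin.castLE (Nat.succ_le_succ hm) k)

lemma le_eval (γ : Fin (d + 1) → ℝ) (x : ℝ) (k : Fin (d + 1)) :
    γ k * x ^ (k : ℕ) ≤ eval γ x :=
  le_sup' (fun k : Fin (d + 1) => γ k * x ^ (k : ℕ)) (mem_univ k)

lemma eval_le {γ : Fin (d + 1) → ℝ} {x c : ℝ} (h : ∀ k, γ k * x ^ (k : ℕ) ≤ c) :
    eval γ x ≤ c :=
  sup'_le _ _ fun k _ => h k

lemma eval_of_fin_one (γ : Fin 1 → ℝ) (x : ℝ) : eval γ x = γ 0 := by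
  simp [eval]

lemma eval_truncate_le (γ : Fin (d + 1) → ℝ) {m : ℕ} (hm : m ≤ d) (x : ℝ) :
    eval (truncate γ hm) x ≤ eval γ x :=
  eval_le fun _ => le_eval γ x _

lemma IsRoot.of_truncate {γ : Fin (d + 1) → ℝ} {m : ℕ} {hm : m ≤ d} {a : ℝ}
    (h : IsRoot (truncate γ hm) a) (heq : eval γ a = eval (truncate γ hm) a) : IsRoot γ a := by
  obtain ⟨k₁, k₂, hne, h₁, h₂⟩ := h
  exact ⟨_, _, (Fin.castLE_injective _).ne hne, h₁.trans heq.symm, h₂.trans heq.symm⟩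

lemma exists_dominating_root {γ : Fin (d + 1) → ℝ} (hγ : ∀ k, 0 ≤ γ k) (h0 : 0 < γ 0)
    (hd : 0 < γ (Fin.last d)) (hpos : 0 < d) :
    ∃ A, 0 < A ∧ (∀ k : Fin (d + 1), γ k ≤ γ (Fin.last d) * A ^ (d - k)) ∧
      ∃ j : Fin d, γ j.castSucc = γ (Fin.last d) * A ^ (d - j) := by
  set r : Fin d → ℝ := fun j => (γ j.castSucc / γ (Fin.last d)) ^ ((d - j : ℕ) : ℝ)⁻¹
  have hr_pow (j : Fin d) : r j ^ (d - j) = γ j.castSucc / γ (Fin.last d) :=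
    Real.rpow_inv_natCast_pow (div_nonneg (hγ _) hd.le) (by omega)
  have hne : (univ : Finset (Fin d)).Nonempty := ⟨⟨0, hpos⟩, mem_univ _⟩
  obtain ⟨j, -, hj⟩ := exists_mem_eq_sup' hne r
  refine ⟨univ.sup' hne r, ?_, fun k => ?_, j, ?_⟩
  · exact (Real.rpow_pos_of_pos (div_pos h0 hd) _).trans_le (le_sup' r (mem_univ ⟨0, hpos⟩))
  · induction k using Fin.lastCases with
    | last => simp
    | cast k =>
      rw [← div_le_iff₀' hd, Fin.val_castSucc, ← hr_pow k]
      exact pow_le_pow_left₀ (Real.rpow_nonneg (div_nonneg (hγ _) hd.le) _)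
        (le_sup' r (mem_univ k)) _
  · rw [hj, hr_pow, mul_div_cancel₀ _ hd.ne']

section Dominated

variable {γ : Fin (d + 1) → ℝ} {A : ℝ}
  (hdom : ∀ k : Fin (d + 1), γ k ≤ γ (Fin.last d) * A ^ (d - k))
include hdom

lemma eval_eq_of_le (hd : 0 ≤ γ (Fin.last d)) {x : ℝ} (hA : 0 ≤ A) (hx : A ≤ x) :
    eval γ x = γ (Fin.last d) * x ^ d := by
  refine le_antisymm (eval_le fun k => ?_) (by simpa using le_eval γ x (Fin.last d))
  have hx0 : 0 ≤ x := hA.trans hx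
  calc γ k * x ^ (k : ℕ) ≤ γ (Fin.last d) * A ^ (d - k) * x ^ (k : ℕ) := by
        gcongr; exact hdom k
    _ ≤ γ (Fin.last d) * x ^ (d - k) * x ^ (k : ℕ) := by gcongr
    _ = γ (Fin.last d) * x ^ d := by rw [mul_assoc, ← pow_add, Nat.sub_add_cancel k.is_le]

lemma isRoot_of_dominating (hd : 0 ≤ γ (Fin.last d)) (hA : 0 ≤ A) {j : Fin d}
    (hj : γ j.castSucc = γ (Fin.last d) * A ^ (d - j)) : IsRoot γ A := by
  have htop := eval_eq_of_le hdom hd hA le_rfl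
  refine ⟨j.castSucc, Fin.last d, (Fin.castSucc_lt_last j).ne, ?_, by simpa using htop.symm⟩
  rw [htop, hj, Fin.val_castSucc, mul_assoc, ← pow_add, Nat.sub_add_cancel j.isLt.le]

lemma eval_eq_eval_truncate_of_le (hd : 0 ≤ γ (Fin.last d)) {j : Fin d}
    (hj : γ j.castSucc = γ (Fin.last d) * A ^ (d - j)) {x : ℝ} (hx0 : 0 ≤ x) (hx : x ≤ A) :
    eval γ x = eval (truncate γ j.isLt.le) x := by
  refine le_antisymm (eval_le fun k => ?_) (eval_truncate_le _ _ _)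
  by_cases hk : (k : ℕ) ≤ j
  · exact le_eval (truncate γ j.isLt.le) x ⟨k, by omega⟩
  · calc γ k * x ^ (k : ℕ) ≤ γ (Fin.last d) * (A ^ (d - k) * x ^ (k : ℕ)) := by
          rw [← mul_assoc]; gcongr; exact hdom k
      _ ≤ γ (Fin.last d) * (A ^ (d - j) * x ^ (j : ℕ)) :=
          mul_le_mul_of_nonneg_left (pow_sub_mul_pow_le hx0 hx (by omega) k.is_le) hd
      _ = truncate γ j.isLt.le (Fin.last j) * x ^ (j : ℕ) := by
          rw [← mul_assoc, ← hj]; rfl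
      _ ≤ eval (truncate γ j.isLt.le) x := le_eval _ x (Fin.last j)

lemma IsFactorization.extendByConst_truncate (hd : 0 < γ (Fin.last d)) (hA : 0 < A)
    {j : Fin d} (hj : γ j.castSucc = γ (Fin.last d) * A ^ (d - j)) {β : Fin j → ℝ}
    (hβ : IsFactorization (truncate γ j.isLt.le) β) : IsFactorization γ (extendByConst β A) := by
  obtain ⟨hmono, hnonneg, hroots, hfac⟩ := hβ
  have hlead : truncate γ j.isLt.le (Fin.last j) = γ (Fin.last d) * A ^ (d - j) := hj
  have hlow (x : ℝ) := eval_eq_eval_truncate_of_le hdom hd.le hj (x := x)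
  -- at `x = A` the truncation equals its leading monomial, which forces every `β k ≤ A`
  have hβA : ∀ k, β k ≤ A := by
    have hlead_ne : truncate γ j.isLt.le (Fin.last j) ≠ 0 := by rw [hlead]; positivity
    have heval : eval (truncate γ j.isLt.le) A =
        truncate γ j.isLt.le (Fin.last j) * A ^ (j : ℕ) := by
      rw [← hlow A hA.le le_rfl, eval_eq_of_le hdom hd.le hA.le le_rfl, hlead, mul_assoc,
        ← pow_add, Nat.sub_add_cancel j.isLt.le]
    exact le_of_prod_max_eq_pow hA β (mul_left_cancel₀ hlead_ne ((hfac A hA).symm.trans heval))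
  refine ⟨monotone_extendByConst hmono hβA, forall_extendByConst hnonneg hA.le,
    forall_extendByConst (fun k => (hroots k).of_truncate (hlow _ (hnonneg k) (hβA k)))
      (isRoot_of_dominating hdom hd.le hA.le hj), fun x hx => ?_⟩
  rw [prod_extendByConst j.isLt.le]
  rcases le_total x A with hxA | hAx
  · rw [hlow x hx.le hxA, hfac x hx, hlead, max_eq_right hxA]
    ring
  · rw [eval_eq_of_le hdom hd.le hA.le hAx, max_eq_left hAx,
      prod_congr rfl fun k _ => max_eq_left ((hβA k).trans hAx), prod_const, card_univ,
      Fintype.card_fin, ← pow_add, Nat.add_sub_cancel' j.isLt.le]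

end Dominated

theorem exists_isFactorization (γ : Fin (d + 1) → ℝ) (hγ : ∀ k, 0 ≤ γ k) (h0 : 0 < γ 0)
    (hd : 0 < γ (Fin.last d)) : ∃ α, IsFactorization γ α := by
  induction d using Nat.strong_induction_on with
  | _ d ih =>
    rcases Nat.eq_zero_or_pos d with rfl | hpos
    · exact ⟨Fin.elim0, fun k => k.elim0, fun k => k.elim0, fun k => k.elim0,
        fun x _ => by simp [eval_of_fin_one]⟩
    obtain ⟨A, hA, hdom, j, hj⟩ := exists_dominating_root hγ h0 hd hpos
    obtain ⟨β, hβ⟩ := ih j j.isLt (truncate γ j.isLt.le) (fun _ => hγ _) h0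
      (hj.trans_gt (by positivity))
    exact ⟨_, hβ.extendByConst_truncate hdom hd hA hj⟩

end MaxTimes

/-- max-times fundamental theorem of algebra: let
`tp(x) = max_{0≤k≤d}(γ_k x^k)` with `γ_k ≥ 0` and `γ₀, γ_d > 0`.  Then there are
tropical roots `α₁ ≤ … ≤ α_d ≥ 0` (counted with multiplicity, each a point where the
maximum defining `tp` is attained at least twice) such that for every `x > 0`,
`tp(x) = γ_d · Π_{k=1}^d max(x, α_k)`. -/
theorem maxtimes_factorization (d : ℕ) (γ : Fin (d + 1) → ℝ)
    (hγ : ∀ k, 0 ≤ γ k) (h0 : 0 < γ 0) (hd : 0 < γ (Fin.last d)) :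
    ∃ α : Fin d → ℝ, Monotone α ∧ (∀ k, 0 ≤ α k) ∧
      (∀ k : Fin d, ∃ k₁ k₂ : Fin (d + 1), k₁ ≠ k₂ ∧
        γ k₁ * α k ^ (k₁ : ℕ) =
          (Finset.univ.sup' Finset.univ_nonempty fun j : Fin (d + 1) => γ j * α k ^ (j : ℕ)) ∧
        γ k₂ * α k ^ (k₂ : ℕ) =
          (Finset.univ.sup' Finset.univ_nonempty fun j : Fin (d + 1) => γ j * α k ^ (j : ℕ))) ∧
      ∀ x : ℝ, 0 < x →
        (Finset.univ.sup' Finset.univ_nonempty fun k : Fin (d + 1) => γ k * x ^ (k : ℕ)) =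
          γ (Fin.last d) * ∏ k : Fin d, max x (α k) := by
  obtain ⟨α, hα⟩ := MaxTimes.exists_isFactorization γ hγ h0 hd
  exact ⟨α, hα⟩
end
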